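/- arXiv:1901.01952 — 2 statements merged into one kernel-verified Lean document; each statement's English description precedes it below -/
import Mathlib

section
/- Every finite word u satisfies P(u) ≤ |u| + 1, where P(u) is the number of distinct palindromic factors of u (including the empty palindrome). -/
/-- The number of distinct palindromic factors of a finite word `u`
(including the empty word). -/
noncomputable def palCount {A : Type*} (u : List A) : ℕ :=
  Set.ncard {p : List A | p.Palindrome ∧ p <:+: u}

/-!
Reading `u` letter by letter, appending a letter `a` creates at most one new palindromic factor.
A new palindrome must be a suffix of `u ++ [a]`; if there were two, the shorter would be a
suffix, hence (both being palindromes) a prefix, of the longer one, and so it would already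
occur in `u`.
-/

namespace List

variable {A : Type*}

theorem Palindrome.isPrefix_of_isSuffix {p q : List A} (hp : p.Palindrome) (hq : q.Palindrome)
    (h : p <:+ q) : p <+: q := by
  rwa [← reverse_prefix, hp.reverse_eq, hq.reverse_eq] at h

theorem Palindrome.isInfix_of_isSuffix_of_length_lt {p q u : List A} {a : A}
    (hp : p.Palindrome) (hq : q.Palindrome) (hpq : p <:+ q) (hlt : p.length < q.length)
    (hqu : q <:+ u ++ [a]) : p <:+: u := by
  obtain hq_nil | ⟨t, rfl, htu⟩ := suffix_concat_iff.1 hqu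
  · simp [hq_nil] at hlt
  obtain rfl | hpt := prefix_concat_iff.1 (hp.isPrefix_of_isSuffix hq hpq)
  · exact absurd hlt (lt_irrefl _)
  · exact hpt.isInfix.trans htu.isInfix

end List

open List

section

variable {A : Type*}

def palFactors (u : List A) : Set (List A) :=
  {p : List A | p.Palindrome ∧ p <:+: u}

theorem palCount_eq_ncard_palFactors (u : List A) : palCount u = (palFactors u).ncard := rfl

theorem palFactors_finite (u : List A) : (palFactors u).Finite :=
  u.sublists.finite_toSet.subset fun _ hp => mem_sublists.2 hp.2.sublist

theorem palFactors_concat_sdiff_subsingleton (u : List A) (a : A) :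
    (palFactors (u ++ [a]) \ palFactors u).Subsingleton := by
  intro p hp q hq
  wlog hle : p.length ≤ q.length generalizing p q
  · exact (this hq hp (le_of_not_ge hle)).symm
  obtain ⟨⟨hp_pal, hp_inf⟩, hp_new⟩ := hp
  obtain ⟨⟨hq_pal, hq_inf⟩, hq_new⟩ := hq
  have hp_suf : p <:+ u ++ [a] := (infix_concat_iff.1 hp_inf).resolve_right (hp_new ⟨hp_pal, ·⟩)
  have hq_suf : q <:+ u ++ [a] := (infix_concat_iff.1 hq_inf).resolve_right (hq_new ⟨hq_pal, ·⟩)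
  have hpq : p <:+ q := suffix_of_suffix_length_le hp_suf hq_suf hle
  rcases hle.lt_or_eq with hlt | heq
  · exact absurd ⟨hp_pal, hp_pal.isInfix_of_isSuffix_of_length_lt hq_pal hpq hlt hq_suf⟩ hp_new
  · exact hpq.eq_of_length heq

theorem palCount_concat_le (u : List A) (a : A) : palCount (u ++ [a]) ≤ palCount u + 1 := by
  have hnew := palFactors_concat_sdiff_subsingleton u a
  have hnew_card : (palFactors (u ++ [a]) \ palFactors u).ncard ≤ 1 :=
    (Set.ncard_le_one_iff hnew.finite).2 (hnew · ·)
  rw [palCount_eq_ncard_palFactors, palCount_eq_ncard_palFactors]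
  calc (palFactors (u ++ [a])).ncard
      ≤ (palFactors (u ++ [a]) \ palFactors u).ncard + (palFactors u).ncard :=
        Set.ncard_le_ncard_sdiff_add_ncard _ _ (palFactors_finite u)
    _ ≤ (palFactors u).ncard + 1 := by omega

theorem palFactors_nil : palFactors ([] : List A) = {[]} := by
  ext p
  simp +contextual [palFactors, Palindrome.nil]

theorem palCount_nil : palCount ([] : List A) = 1 := by
  rw [palCount_eq_ncard_palFactors, palFactors_nil, Set.ncard_singleton]

end

theorem palCount_le_length_succ {A : Type*} (u : List A) :
    palCount u ≤ u.length + 1 := by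
  induction u using reverseRecOn with
  | nil => exact palCount_nil.le
  | append_singleton u a ih =>
    calc palCount (u ++ [a]) ≤ palCount u + 1 := palCount_concat_le u a
      _ ≤ (u ++ [a]).length + 1 := by simpa using ih
end

section
/- Let w be an infinite word avoiding k-th powers (k ≥ 2) and let N ≥ 1. For every position i, the number of nonempty palindromes of the form w[i..j] with length at most N is at most 1 + log_{k/(k−1)} N. -/
/-- `wpow u k` is the `k`-fold concatenation of the word `u`. -/
def wpow {A : Type*} (u : List A) (k : ℕ) : List A :=
  (List.replicate k u).flatten

/-- The factor `w[i..j]` (inclusive) of the infinite word `w`. -/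
def wseg {A : Type*} (w : ℕ → A) (i j : ℕ) : List A :=
  (List.range (j + 1 - i)).map (fun t => w (i + t))

/-- `w` avoids `k`-th powers: no factor of `w` is of the form `u^k` with `u` nonempty. -/
def AvoidsPower {A : Type*} (w : ℕ → A) (k : ℕ) : Prop :=
  ∀ u : List A, u ≠ [] → ∀ i : ℕ, wpow u k ≠ wseg w i (i + (wpow u k).length - 1)

/-! If `u` and `v` are palindromes starting at the same position with `|u| < |v|`, reflecting
first in the centre of `v` and then in the centre of `u` shows that `v` has period `|v| - |u|`.
A factor of length `L` with period `d` contains a `k`-th power unless `L < k d`, so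
`|v| < k (|v| - |u|)`, i.e. `|v| > k/(k-1) · |u|`. Hence the lengths of the palindromes starting
at `i` grow geometrically with ratio `k/(k-1)`, and at most `1 + log_{k/(k-1)} N` of them are
at most `N`. -/

section Words

variable {A : Type*}

theorem wpow_succ (u : List A) (m : ℕ) : wpow u (m + 1) = u ++ wpow u m := rfl

theorem List.Palindrome.apply_eq_apply_sub_of_map_range {f : ℕ → A} {n : ℕ}
    (h : ((List.range n).map f).Palindrome) {t : ℕ} (ht : t < n) :
    f t = f (n - 1 - t) := by
  have := congrArg (·[t]?) h.reverse_eq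
  simpa [ht] using this.symm

theorem apply_eq_apply_add_sub_of_palindrome {f : ℕ → A} {p q : ℕ} (hpq : p ≤ q)
    (hp : ((List.range p).map f).Palindrome) (hq : ((List.range q).map f).Palindrome)
    {t : ℕ} (ht : t + (q - p) < q) : f t = f (t + (q - p)) := by
  rw [hq.apply_eq_apply_sub_of_map_range ht, hp.apply_eq_apply_sub_of_map_range (t := t)
    (by omega)]
  congr 1; omega

theorem wpow_map_range_of_period {f : ℕ → A} {d L : ℕ}
    (hf : ∀ t, t + d < L → f t = f (t + d)) {m : ℕ} (hm : m * d ≤ L) :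
    wpow ((List.range d).map f) m = (List.range (m * d)).map f := by
  induction m with
  | zero => simp [wpow]
  | succ m ih =>
    rw [wpow_succ, ih (by nlinarith), show (m + 1) * d = d + m * d by ring, List.range_add,
      List.map_append, List.map_map]
    congr 1
    refine List.map_congr_left fun t ht => ?_
    rw [List.mem_range] at ht
    rw [Function.comp_apply, hf t (by nlinarith), add_comm]

theorem wseg_add_sub_one (w : ℕ → A) (i : ℕ) {n : ℕ} (hn : 0 < n) :
    wseg w i (i + n - 1) = (List.range n).map (fun t => w (i + t)) := by
  unfold wseg; congr 2; omega

theorem AvoidsPower.lt_mul_of_period {w : ℕ → A} {k : ℕ} (hw : AvoidsPower w k) (hk : 0 < k)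
    {i d L : ℕ} (hd : 0 < d) (hper : ∀ t, t + d < L → w (i + t) = w (i + (t + d))) :
    L < k * d := by
  by_contra! hL
  have hpow := wpow_map_range_of_period hper hL
  refine hw ((List.range d).map fun t => w (i + t)) (by simpa using hd.ne') i ?_
  rw [hpow, List.length_map, List.length_range, wseg_add_sub_one w i (Nat.mul_pos hk hd)]

theorem AvoidsPower.lt_mul_sub_of_palindrome {w : ℕ → A} {k : ℕ} (hw : AvoidsPower w k)
    (hk : 0 < k) {i p q : ℕ} (hpq : p < q)
    (hp : ((List.range p).map (fun t => w (i + t))).Palindrome)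
    (hq : ((List.range q).map (fun t => w (i + t))).Palindrome) :
    q < k * (q - p) :=
  hw.lt_mul_of_period hk (by omega) fun _ ht =>
    apply_eq_apply_add_sub_of_palindrome hpq.le hp hq ht

end Words

theorem pow_card_le_of_mul_le {α : Type*} [LinearOrder α] {r b : ℝ} (hr : 0 ≤ r) (f : α → ℝ)
    (s : Finset α) (hf : ∀ a ∈ s, 1 ≤ f a) (hgap : ∀ a ∈ s, ∀ c ∈ s, a < c → r * f a ≤ f c)
    (hb : 1 ≤ b) (hsb : ∀ a ∈ s, r * f a ≤ b) : r ^ s.card ≤ b := by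
  classical
  induction s using Finset.induction_on_max generalizing b with
  | empty => simpa using hb
  | insert a s hlt ih =>
    rw [Finset.card_insert_of_notMem fun ha => (hlt a ha).false, pow_succ']
    have hs : ∀ x ∈ s, x ∈ insert a s := fun x hx => Finset.mem_insert_of_mem hx
    have ha := Finset.mem_insert_self a s
    calc r * r ^ s.card
        ≤ r * f a := by
          refine mul_le_mul_of_nonneg_left (ih (fun x hx => hf x (hs x hx))
            (fun x hx c hc => hgap x (hs x hx) c (hs c hc)) (hf a ha)
            fun x hx => hgap x (hs x hx) a ha (hlt x hx)) hr
      _ ≤ b := hsb a ha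

theorem div_sub_one_mul_le_of_lt_mul_sub {k p q : ℕ} (hk : 1 < k) (hpq : p ≤ q)
    (h : q < k * (q - p)) : (k : ℝ) / (k - 1) * p ≤ q := by
  have hk' : (1 : ℝ) < k := by exact_mod_cast hk
  have h' : (q : ℝ) ≤ k * (q - p) := by
    rw [← Nat.cast_sub hpq]; exact_mod_cast h.le
  rw [div_mul_eq_mul_div, div_le_iff₀ (by linarith)]
  linarith

theorem count_palindromes_from_position {A : Type*} (w : ℕ → A) (k : ℕ)
    (hk : 2 ≤ k) (hw : AvoidsPower w k) (N : ℕ) (hN : 1 ≤ N) (i : ℕ) :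
    (Set.ncard {j : ℕ | i ≤ j ∧ j + 1 - i ≤ N ∧ (wseg w i j).Palindrome} : ℝ)
      ≤ 1 + Real.logb ((k : ℝ) / ((k : ℝ) - 1)) N := by
  set r : ℝ := k / (k - 1)
  have hr : 1 < r := by
    have hk' : (2 : ℝ) ≤ k := by exact_mod_cast hk
    rw [lt_div_iff₀ (by linarith)]; linarith
  set S := {j : ℕ | i ≤ j ∧ j + 1 - i ≤ N ∧ (wseg w i j).Palindrome}
  have hS : S.Finite :=
    (Set.finite_Icc i (i + N)).subset fun j hj => ⟨hj.1, by have := hj.2.1; omega⟩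
  have hlen : ∀ j ∈ S, 1 ≤ ((j + 1 - i : ℕ) : ℝ) ∧ r * (j + 1 - i : ℕ) ≤ r * N := by
    rintro j ⟨hij, hjN, -⟩
    exact ⟨by exact_mod_cast (by omega : 1 ≤ j + 1 - i),
      mul_le_mul_of_nonneg_left (by exact_mod_cast hjN) (by linarith)⟩
  have hgap : ∀ j ∈ S, ∀ j' ∈ S, j < j' → r * (j + 1 - i : ℕ) ≤ (j' + 1 - i : ℕ) := by
    rintro j ⟨hij, -, hj⟩ j' ⟨-, -, hj'⟩ hjj'
    exact div_sub_one_mul_le_of_lt_mul_sub (by omega) (by omega)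
      (hw.lt_mul_sub_of_palindrome (by omega) (by omega : j + 1 - i < j' + 1 - i) hj hj')
  have hpow : r ^ S.ncard ≤ r * N := by
    rw [Set.ncard_eq_toFinset_card S hS]
    exact pow_card_le_of_mul_le (by linarith) (fun j => ((j + 1 - i : ℕ) : ℝ)) _
      (fun j hj => (hlen j (hS.mem_toFinset.1 hj)).1) (by simpa using hgap)
      (one_le_mul_of_one_le_of_one_le hr.le (by exact_mod_cast hN))
      (fun j hj => (hlen j (hS.mem_toFinset.1 hj)).2)
  have hlog : (S.ncard : ℝ) ≤ Real.logb r (r * N) := by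
    rwa [Real.le_logb_iff_rpow_le hr (by positivity), Real.rpow_natCast]
  rwa [Real.logb_mul (by positivity) (by positivity), Real.logb_self_eq_one hr] at hlog
end
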